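/- arXiv:0903.2394 — 4 statements merged into one kernel-verified Lean document; each statement's English description precedes it below -/
import Mathlib

section
/- Let f be a holomorphic function defined near 0 in ℂ with f(z) = e^{2πiα} z + O(z^N) for some N ≥ 2 and α real. Then there exist constants C > 0 and ε₀ > 0 such that for all z with |z| ≤ ε₀, the first ⌊C|z|^{-(N-1)}⌋ iterates f^k(z) are defined and satisfy |f^k(z)| ≤ 2|z|. -/
/-!
Since `|f'(0)| = 1`, one step of `f` increases the modulus by at most `C₁ |w|^N`. As long as the
orbit of `z` stays in the disc of radius `2|z|`, each step therefore adds at most `C₁ (2|z|)^N`,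
and `k` steps add at most `|z|` precisely when `k ≲ |z|^{-(N-1)}`; an induction on the number of
steps keeps the orbit inside that disc.
-/

open Function

section OrbitBound

variable {E : Type*} [NormedAddCommGroup E]

theorem norm_le_norm_add_of_norm_sub_smul_le {𝕜 : Type*} [NormedField 𝕜] [NormedSpace 𝕜 E]
    {c : 𝕜} (hc : ‖c‖ ≤ 1) {x y : E} {ε : ℝ} (h : ‖y - c • x‖ ≤ ε) : ‖y‖ ≤ ‖x‖ + ε :=
  calc ‖y‖ ≤ ‖c • x‖ + ‖y - c • x‖ := norm_le_norm_add_norm_sub' y (c • x)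
    _ ≤ ‖x‖ + ε := by
      rw [norm_smul]
      gcongr
      exact mul_le_of_le_one_left (norm_nonneg x) hc

theorem norm_iterate_le_two_mul_of_norm_le_add_pow {g : E → E} {ρ K : ℝ} {N : ℕ} (hK : 0 ≤ K)
    (hg : ∀ w, ‖w‖ ≤ ρ → ‖g w‖ ≤ ‖w‖ + K * ‖w‖ ^ N) {z : E} (hz : 2 * ‖z‖ ≤ ρ) {k : ℕ}
    (hk : k * (K * (2 * ‖z‖) ^ N) ≤ ‖z‖) : ∀ j ≤ k, ‖g^[j] z‖ ≤ 2 * ‖z‖ := by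
  set δ := K * (2 * ‖z‖) ^ N
  have hδ : 0 ≤ δ := by positivity
  have hjδ {j : ℕ} (hj : j ≤ k) : j * δ ≤ ‖z‖ :=
    (mul_le_mul_of_nonneg_right (Nat.cast_le.mpr hj) hδ).trans hk
  suffices drift : ∀ j ≤ k, ‖g^[j] z‖ ≤ ‖z‖ + j * δ from
    fun j hj => (drift j hj).trans (by linarith [hjδ hj])
  intro j
  induction j with
  | zero => simp
  | succ j ih =>
    intro hj
    have hprev := ih (by omega)
    have hw : ‖g^[j] z‖ ≤ 2 * ‖z‖ := by linarith [hjδ (by omega : j ≤ k)]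
    have hstep : K * ‖g^[j] z‖ ^ N ≤ δ := by unfold δ; gcongr
    rw [iterate_succ_apply']
    push_cast
    linarith [hg _ (hw.trans hz)]

end OrbitBound

theorem mul_mul_pow_le_of_le_inv_mul_rpow {x c t : ℝ} {N : ℕ} (hx : 0 ≤ x) (hN : 1 ≤ N)
    (hc : 0 < c) (ht : t ≤ c⁻¹ * x ^ (-((N : ℝ) - 1))) : t * (c * x ^ N) ≤ x := by
  rcases hx.eq_or_lt with rfl | hx
  · simp [zero_pow (by omega : N ≠ 0)]
  calc t * (c * x ^ N) ≤ c⁻¹ * x ^ (-((N : ℝ) - 1)) * (c * x ^ N) := by gcongr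
    _ = x ^ (-((N : ℝ) - 1) + N) := by
      rw [Real.rpow_add hx, Real.rpow_natCast]
      field_simp
    _ = x := by norm_num

theorem Complex.norm_exp_two_pi_I_mul (α : ℝ) : ‖Complex.exp (2 * Real.pi * Complex.I * α)‖ = 1 := by
  convert Complex.norm_exp_ofReal_mul_I (2 * Real.pi * α) using 3
  push_cast
  ring

theorem stmt0_general (f : ℂ → ℂ) (α : ℝ) (N : ℕ) (hN : 2 ≤ N)
    (r C₁ : ℝ) (hr : 0 < r) (hC₁ : 0 < C₁)
    (hfN : ∀ z : ℂ, ‖z‖ ≤ r →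
      ‖f z - Complex.exp (2 * Real.pi * Complex.I * α) * z‖ ≤ C₁ * ‖z‖ ^ N) :
    ∃ C > (0:ℝ), ∃ ε₀ > (0:ℝ), ε₀ ≤ r ∧
      ∀ z : ℂ, ‖z‖ ≤ ε₀ →
        ∀ k : ℕ, (k : ℝ) ≤ C * ‖z‖ ^ (-((N : ℝ) - 1)) →
          ∀ j ≤ k, ‖f^[j] z‖ ≤ 2 * ‖z‖ ∧ ‖f^[j] z‖ ≤ r := by
  refine ⟨(C₁ * 2 ^ N)⁻¹, by positivity, r / 2, by positivity, by linarith, ?_⟩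
  intro z hz k hk j hj
  have hstep (w : ℂ) (hw : ‖w‖ ≤ r) : ‖f w‖ ≤ ‖w‖ + C₁ * ‖w‖ ^ N :=
    norm_le_norm_add_of_norm_sub_smul_le (Complex.norm_exp_two_pi_I_mul α).le (hfN w hw)
  have hk' : k * (C₁ * (2 * ‖z‖) ^ N) ≤ ‖z‖ := by
    rw [mul_pow, ← mul_assoc C₁]
    exact mul_mul_pow_le_of_le_inv_mul_rpow (norm_nonneg z) (by omega) (by positivity) hk
  have horbit := norm_iterate_le_two_mul_of_norm_le_add_pow hC₁.le hstep (by linarith) hk' j hj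
  exact ⟨horbit, by linarith⟩

/-- Lemma 3.4: for f(z) = e^{2πiα}z + O(z^N), at least ⌊C|z|^{-(N-1)}⌋ iterates
of f are defined on z (they stay in the domain {|w| ≤ r}) and satisfy |f^k(z)| ≤ 2|z|. -/
theorem stmt0 (f : ℂ → ℂ) (α : ℝ) (N : ℕ) (hN : 2 ≤ N)
    (r C₁ : ℝ) (hr : 0 < r) (hC₁ : 0 < C₁)
    (hf : AnalyticAt ℂ f 0) (hf0 : f 0 = 0)
    (hfN : ∀ z : ℂ, ‖z‖ ≤ r →
      ‖f z - Complex.exp (2 * Real.pi * Complex.I * α) * z‖ ≤ C₁ * ‖z‖ ^ N) :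
    ∃ C > (0:ℝ), ∃ ε₀ > (0:ℝ), ε₀ ≤ r ∧
      ∀ z : ℂ, ‖z‖ ≤ ε₀ →
        ∀ k : ℕ, (k : ℝ) ≤ C * ‖z‖ ^ (-((N : ℝ) - 1)) →
          ∀ j ≤ k, ‖f^[j] z‖ ≤ 2 * ‖z‖ ∧ ‖f^[j] z‖ ≤ r :=
  stmt0_general f α N hN r C₁ hr hC₁ hfN
end

section
/- Let φ(t) = t + C₁ t^N for constants C₁ > 0 and integer N ≥ 2. Then there exist t₀ > 0 and C₂ > 0 such that for all 0 < t ≤ t₀ and all natural numbers k ≤ 1/(2 C₂ t^{N-1}), the k-th iterate satisfies φ^k(t) ≤ t (1 - k C₂ t^{N-1})^{-1/(N-1)}, and in particular φ^k(t) ≤ 2t. -/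
/-!
Write `m = N - 1`. The substitution `u = x⁻ᵐ` almost linearises the dynamics: since
`φ x = x (1 + C₁ xᵐ)`, Bernoulli's inequality `(1 + v)⁻ᵐ ≥ 1 - m v` shows that one step of `φ`
lowers `x⁻ᵐ` by at most `m C₁`. Hence `(φᵏ t)⁻ᵐ ≥ t⁻ᵐ (1 - k m C₁ tᵐ)`, which is the claimed bound
with `C₂ = m C₁` (and any `t₀`); when `k C₂ tᵐ ≤ 1/2` it gives `(φᵏ t)ᵐ ≤ 2 tᵐ ≤ (2 t)ᵐ`.
-/

open Function

lemma one_sub_mul_le_inv_one_add_pow (m : ℕ) {v : ℝ} (hv : 0 ≤ v) :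
    1 - m * v ≤ ((1 + v) ^ m)⁻¹ := by
  have h1v : 0 < 1 + v := by linarith
  have hw : -2 ≤ -v / (1 + v) := by
    rw [le_div_iff₀ h1v]; linarith
  calc 1 - m * v ≤ 1 + m * (-v / (1 + v)) := by
        have : m * (v / (1 + v)) ≤ m * v :=
          mul_le_mul_of_nonneg_left (div_le_self hv (by linarith)) m.cast_nonneg
        rw [neg_div]; linarith
    _ ≤ (1 + -v / (1 + v)) ^ m := one_add_mul_le_pow hw m
    _ = ((1 + v) ^ m)⁻¹ := by
        rw [← inv_pow]; congr 1; field_simp; ring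

lemma inv_pow_sub_le_inv_pow_add_mul_pow (m : ℕ) {C x : ℝ} (hC : 0 ≤ C) (hx : 0 < x) :
    (x ^ m)⁻¹ - m * C ≤ ((x + C * x ^ (m + 1)) ^ m)⁻¹ := by
  have hxm : 0 < x ^ m := by positivity
  have hfactor : x + C * x ^ (m + 1) = x * (1 + C * x ^ m) := by ring
  calc (x ^ m)⁻¹ - m * C = (x ^ m)⁻¹ * (1 - m * (C * x ^ m)) := by
        field_simp
    _ ≤ (x ^ m)⁻¹ * ((1 + C * x ^ m) ^ m)⁻¹ :=
        mul_le_mul_of_nonneg_left (one_sub_mul_le_inv_one_add_pow m (by positivity))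
          (inv_nonneg.2 hxm.le)
    _ = ((x + C * x ^ (m + 1)) ^ m)⁻¹ := by rw [hfactor, mul_pow, mul_inv]

section Iterate

variable (m : ℕ) {C : ℝ} (hC : 0 ≤ C)
include hC

lemma iterate_add_mul_pow_pos {t : ℝ} (ht : 0 < t) (k : ℕ) :
    0 < (fun x : ℝ => x + C * x ^ (m + 1))^[k] t := by
  have hmaps : Set.MapsTo (fun x : ℝ => x + C * x ^ (m + 1)) (Set.Ioi 0) (Set.Ioi 0) :=
    fun x (hx : 0 < x) => show 0 < x + C * x ^ (m + 1) by positivity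
  exact hmaps.iterate k ht

lemma inv_pow_sub_le_inv_pow_iterate {t : ℝ} (ht : 0 < t) (k : ℕ) :
    (t ^ m)⁻¹ - k * (m * C) ≤ (((fun x : ℝ => x + C * x ^ (m + 1))^[k] t) ^ m)⁻¹ := by
  induction k with
  | zero => simp
  | succ k ih =>
    rw [iterate_succ_apply']
    have hstep := inv_pow_sub_le_inv_pow_add_mul_pow m hC (iterate_add_mul_pow_pos m hC ht k)
    push_cast
    linarith

end Iterate

lemma le_mul_rpow_neg_inv_of_pow_le {m : ℕ} (hm : m ≠ 0) {y t a : ℝ} (hy : 0 ≤ y) (ht : 0 ≤ t)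
    (ha : 0 < a) (h : y ^ m ≤ t ^ m * a⁻¹) : y ≤ t * a ^ (-(1 / (m : ℝ))) := by
  have hroot : (a ^ (-(1 / (m : ℝ)))) ^ m = a⁻¹ := by
    rw [← Real.rpow_natCast, ← Real.rpow_mul ha.le, neg_mul, one_div_mul_cancel (by positivity),
      Real.rpow_neg_one]
  rw [← pow_le_pow_iff_left₀ hy (by positivity) hm, mul_pow, hroot]
  exact h

/-- Iterates of φ(t) = t + C₁ t^N satisfy φ^k(t) ≤ t(1 - kC₂t^{N-1})^{-1/(N-1)} ≤ 2t
for k ≤ 1/(2C₂ t^{N-1}). -/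
theorem stmt1 (C₁ : ℝ) (hC₁ : 0 < C₁) (N : ℕ) (hN : 2 ≤ N) :
    ∃ t₀ > (0:ℝ), ∃ C₂ > (0:ℝ),
      ∀ t : ℝ, 0 < t → t ≤ t₀ →
        ∀ k : ℕ, (k : ℝ) ≤ 1 / (2 * C₂ * t ^ (N - 1)) →
          (fun x : ℝ => x + C₁ * x ^ N)^[k] t
              ≤ t * (1 - (k : ℝ) * C₂ * t ^ (N - 1)) ^ (-(1 / ((N : ℝ) - 1))) ∧
          (fun x : ℝ => x + C₁ * x ^ N)^[k] t ≤ 2 * t := by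
  obtain ⟨m, rfl⟩ : ∃ m, N = m + 1 := ⟨N - 1, by omega⟩
  have hm : m ≠ 0 := by omega
  refine ⟨1, one_pos, m * C₁, by positivity, fun t ht _ k hk => ?_⟩
  simp only [Nat.add_sub_cancel, Nat.cast_add, Nat.cast_one, add_sub_cancel_right] at hk ⊢
  set y := (fun x : ℝ => x + C₁ * x ^ (m + 1))^[k] t
  set a := 1 - k * (m * C₁) * t ^ m
  have hka : 1 / 2 ≤ a := by
    rw [le_div_iff₀ (by positivity)] at hk
    linarith
  have hy : 0 < y := iterate_add_mul_pow_pos m hC₁.le ht k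
  have hym : y ^ m ≤ t ^ m * a⁻¹ := by
    have h := inv_pow_sub_le_inv_pow_iterate m hC₁.le ht k
    have htm : 0 < t ^ m := by positivity
    rw [show (t ^ m)⁻¹ - k * (m * C₁) = (t ^ m)⁻¹ * a by field_simp; ring] at h
    rw [← inv_le_inv₀ (by positivity) (by positivity), mul_inv, inv_inv]
    exact h
  refine ⟨le_mul_rpow_neg_inv_of_pow_le hm hy.le ht.le (by linarith) hym, ?_⟩
  rw [← pow_le_pow_iff_left₀ hy.le (by positivity) hm]
  calc y ^ m ≤ t ^ m * a⁻¹ := hym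
    _ ≤ t ^ m * 2 := by
        gcongr
        rw [inv_le_comm₀ (by linarith) two_pos]; linarith
    _ ≤ 2 ^ m * t ^ m := by
        rw [mul_comm]; gcongr
        exact le_self_pow₀ one_le_two hm
    _ = (2 * t) ^ m := (mul_pow 2 t m).symm
end

section
/- Let g be a germ of holomorphic diffeomorphism at 0 with |g'(0)| ≠ 1. Then g is holomorphically linearizable: there exists a germ of holomorphic diffeomorphism h with h(0) = 0, h'(0) = 1, such that h^{-1} ∘ g ∘ h (z) = g'(0)·z near 0. -/
/-!
If `0 < |λ| < 1`, where `λ = g'(0)`, then `g z = λ z + O(z²)` maps a small disc `|z| < r` into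
itself with `|g z| ≤ c |z|` for some `c` with `c² < |λ| < c < 1`. Hence the increments of
`g^[n] z / λⁿ` are `O((c² / |λ|)ⁿ)` uniformly on the disc, and the limit `φ` is holomorphic,
tangent to the identity, and solves Schröder's equation `φ ∘ g = λ φ`; its local inverse `h` then
satisfies `g ∘ h = h ∘ (λ ·)`. If `|λ| > 1`, the attracting germ `g⁻¹` has the same Schröder
solutions.
-/

open Filter Function Metric Set
open scoped Topology

theorem exists_tendstoUniformlyOn_of_norm_sub_le {β E : Type*} [NormedAddCommGroup E]
    [CompleteSpace E] {F : ℕ → β → E} {u : ℕ → ℝ} {s : Set β} (hu : Summable u)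
    (hF : ∀ n, ∀ x ∈ s, ‖F (n + 1) x - F n x‖ ≤ u n) :
    ∃ f, TendstoUniformlyOn F f atTop s := by
  have hsum := tendstoUniformlyOn_tsum_nat hu hF
  refine ⟨fun x => F 0 x + ∑' n, (F (n + 1) x - F n x), ?_⟩
  rw [Metric.tendstoUniformlyOn_iff] at hsum ⊢
  intro ε hε
  filter_upwards [hsum ε hε] with N hN x hx
  have htelescope : F N x = F 0 x + ∑ n ∈ Finset.range N, (F (n + 1) x - F n x) := by
    rw [Finset.sum_range_sub (F · x)]; abel
  rw [htelescope, dist_add_left]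
  exact hN x hx

theorem AnalyticAt.isBigO_sub_sub_deriv_mul {𝕜 : Type*} [NontriviallyNormedField 𝕜]
    {f : 𝕜 → 𝕜} {x : 𝕜} (hf : AnalyticAt 𝕜 f x) :
    (fun y => f (x + y) - f x - deriv f x * y) =O[𝓝 0] fun y => ‖y‖ ^ 2 := by
  obtain ⟨p, hp⟩ := hf
  have hpartialSum (y : 𝕜) : p.partialSum 2 y = f x + deriv f x * y := by
    rw [FormalMultilinearSeries.partialSum, Finset.sum_range_succ, Finset.sum_range_one,
      hp.coeff_zero, FormalMultilinearSeries.apply_eq_pow_smul_coeff, hp.deriv,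
      pow_one, smul_eq_mul, mul_comm]
    rfl
  simpa only [hpartialSum, sub_sub] using hp.isBigO_sub_partialSum_pow 2

theorem HasDerivAt.eventually_norm_le_mul {𝕜 : Type*} [NontriviallyNormedField 𝕜]
    {f : 𝕜 → 𝕜} {f' : 𝕜} {c : ℝ} (hf : HasDerivAt f f' 0) (h0 : f 0 = 0) (hc : ‖f'‖ < c) :
    ∀ᶠ z in 𝓝 0, ‖f z‖ ≤ c * ‖z‖ := by
  have hlo := hasDerivAt_iff_isLittleO.mp hf
  filter_upwards [Asymptotics.isLittleO_iff.mp hlo (sub_pos.mpr hc)] with z hz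
  simp only [h0, sub_zero, smul_eq_mul] at hz
  calc ‖f z‖ = ‖z * f' + (f z - z * f')‖ := by rw [add_sub_cancel]
    _ ≤ ‖f'‖ * ‖z‖ + (c - ‖f'‖) * ‖z‖ := by
      grw [norm_add_le, norm_mul, hz, mul_comm]
    _ = c * ‖z‖ := by ring

theorem mapsTo_ball_zero_of_norm_le {E : Type*} [SeminormedAddCommGroup E] {g : E → E}
    {c r : ℝ} (hc : c ≤ 1) (hg : ∀ z ∈ ball (0 : E) r, ‖g z‖ ≤ c * ‖z‖) :
    MapsTo g (ball 0 r) (ball 0 r) := by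
  intro z hz
  rw [mem_ball_zero_iff] at hz ⊢
  calc ‖g z‖ ≤ c * ‖z‖ := hg z (mem_ball_zero_iff.mpr hz)
    _ ≤ ‖z‖ := mul_le_of_le_one_left (norm_nonneg z) hc
    _ < r := hz

theorem norm_iterate_le_of_norm_le {E : Type*} [SeminormedAddCommGroup E] {g : E → E}
    {s : Set E} {c : ℝ} (hc : 0 ≤ c) (hs : MapsTo g s s) (hg : ∀ z ∈ s, ‖g z‖ ≤ c * ‖z‖)
    (n : ℕ) {z : E} (hz : z ∈ s) : ‖g^[n] z‖ ≤ c ^ n * ‖z‖ := by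
  induction n with
  | zero => simp
  | succ n ih =>
    rw [iterate_succ_apply', pow_succ', mul_assoc]
    exact (hg _ (hs.iterate n hz)).trans (mul_le_mul_of_nonneg_left ih hc)

theorem iterate_succ_div_pow_sub {𝕜 : Type*} [Field 𝕜] (g : 𝕜 → 𝕜) {a : 𝕜} (ha : a ≠ 0)
    (n : ℕ) (z : 𝕜) :
    g^[n + 1] z / a ^ (n + 1) - g^[n] z / a ^ n = (g (g^[n] z) - a * g^[n] z) / a ^ (n + 1) := by
  rw [iterate_succ_apply']
  field_simp
  ring

theorem AnalyticAt.exists_localInverse {𝕜 : Type*} [NontriviallyNormedField 𝕜] [CompleteSpace 𝕜]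
    [CharZero 𝕜] {f : 𝕜 → 𝕜} {x : 𝕜} (hf : AnalyticAt 𝕜 f x) (hf' : deriv f x ≠ 0) :
    ∃ f' : 𝕜 → 𝕜, AnalyticAt 𝕜 f' (f x) ∧ f' (f x) = x ∧ deriv f' (f x) = (deriv f x)⁻¹ ∧
      (∀ᶠ z in 𝓝 x, f' (f z) = z) ∧ ∀ᶠ z in 𝓝 (f x), f (f' z) = z :=
  ⟨_, hf.analyticAt_localInverse hf', HasStrictFDerivAt.localInverse_apply_image _,
    (HasStrictDerivAt.to_localInverse _ hf').hasDerivAt.deriv,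
    HasStrictDerivAt.eventually_left_inverse _ hf', HasStrictDerivAt.eventually_right_inverse _ hf'⟩

structure IsKoenigsCoordinate (g φ : ℂ → ℂ) : Prop where
  analyticAt : AnalyticAt ℂ φ 0
  map_zero : φ 0 = 0
  deriv_eq_one : deriv φ 0 = 1
  schroeder : ∀ᶠ z in 𝓝 0, φ (g z) = deriv g 0 * φ z

namespace IsKoenigsCoordinate

variable {g φ : ℂ → ℂ}

theorem of_tendstoLocallyUniformlyOn {s : Set ℂ} (hs : IsOpen s) (hs0 : 0 ∈ s)
    (hgs : MapsTo g s s) (hg : DifferentiableOn ℂ g s) (hg0 : g 0 = 0) (hg' : deriv g 0 ≠ 0)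
    (hφ : TendstoLocallyUniformlyOn (fun n z => g^[n] z / deriv g 0 ^ n) φ atTop s) :
    IsKoenigsCoordinate g φ := by
  set a := deriv g 0
  have hdiff (n : ℕ) : DifferentiableOn ℂ (fun z => g^[n] z / a ^ n) s :=
    (hg.iterate hgs n).div_const _
  have hderiv (n : ℕ) : deriv (fun z => g^[n] z / a ^ n) 0 = 1 := by
    have hga : HasDerivAt g a 0 := (hg.differentiableAt (hs.mem_nhds hs0)).hasDerivAt
    rw [((HasDerivAt.iterate _ hga hg0 n).div_const _).deriv, div_self (pow_ne_zero n hg')]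
  refine ⟨?_, ?_, ?_, ?_⟩
  · exact (hφ.differentiableOn (.of_forall hdiff) hs).analyticAt (hs.mem_nhds hs0)
  · refine tendsto_nhds_unique (hφ.tendsto_at hs0) ?_
    simp [iterate_fixed hg0]
  · refine tendsto_nhds_unique ((hφ.deriv (.of_forall hdiff) hs).tendsto_at hs0) ?_
    simp only [comp_def, hderiv, tendsto_const_nhds]
  · filter_upwards [hs.mem_nhds hs0] with z hz
    have hshift (n : ℕ) : g^[n] (g z) / a ^ n = a * (g^[n + 1] z / a ^ (n + 1)) := by
      rw [iterate_succ_apply]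
      field_simp
      ring
    refine tendsto_nhds_unique (hφ.tendsto_at (hgs hz)) ?_
    simpa only [hshift, comp_def] using
      ((hφ.tendsto_at hz).comp (tendsto_add_atTop_nat 1)).const_mul a

theorem of_leftInverse {g' : ℂ → ℂ} (hg : ContinuousAt g 0) (hg0 : g 0 = 0)
    (hd : deriv g 0 ≠ 0) (hd' : deriv g' 0 = (deriv g 0)⁻¹) (hinv : ∀ᶠ z in 𝓝 0, g' (g z) = z)
    (hφ : IsKoenigsCoordinate g' φ) : IsKoenigsCoordinate g φ := by
  refine ⟨hφ.analyticAt, hφ.map_zero, hφ.deriv_eq_one, ?_⟩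
  have hgφ : ∀ᶠ z in 𝓝 0, φ (g' (g z)) = deriv g' 0 * φ (g z) :=
    (hg0 ▸ hg.tendsto).eventually hφ.schroeder
  filter_upwards [hgφ, hinv] with z hz hzinv
  rw [hzinv, hd'] at hz
  rw [hz, mul_inv_cancel_left₀ hd]

theorem exists_linearization (hφ : IsKoenigsCoordinate g φ) (hg : ContinuousAt g 0)
    (hg0 : g 0 = 0) :
    ∃ h : ℂ → ℂ, AnalyticAt ℂ h 0 ∧ h 0 = 0 ∧ deriv h 0 = 1 ∧
      ∀ᶠ z in 𝓝 0, g (h z) = h (deriv g 0 * z) := by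
  obtain ⟨h, hh, hh0, hhd, hleft, hright⟩ :=
    hφ.analyticAt.exists_localInverse (by simp [hφ.deriv_eq_one])
  simp only [hφ.map_zero, hφ.deriv_eq_one, inv_one] at hh hh0 hhd hright
  refine ⟨h, hh, hh0, hhd, ?_⟩
  have htends : Tendsto h (𝓝 0) (𝓝 0) := by simpa [hh0] using hh.continuousAt.tendsto
  have hgh : Tendsto (g ∘ h) (𝓝 0) (𝓝 0) := (hg0 ▸ hg.tendsto).comp htends
  filter_upwards [hgh.eventually hleft, htends.eventually hφ.schroeder, hright]
    with z hinv hschroeder hright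
  calc g (h z) = h (φ (g (h z))) := hinv.symm
    _ = h (deriv g 0 * z) := by rw [hschroeder, hright]

end IsKoenigsCoordinate

theorem exists_isKoenigsCoordinate_of_norm_lt_one {g : ℂ → ℂ} (hg : AnalyticAt ℂ g 0)
    (hg0 : g 0 = 0) (hg' : deriv g 0 ≠ 0) (hlt : ‖deriv g 0‖ < 1) :
    ∃ φ, IsKoenigsCoordinate g φ := by
  set a := deriv g 0
  have ha : 0 < ‖a‖ := norm_pos_iff.mpr hg'
  -- `c` contracts the iterates, and `c ^ 2 < ‖a‖` beats the division by `a ^ n`.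
  obtain ⟨c, hac, hc⟩ := exists_between (Real.lt_sqrt_self_iff.mpr ⟨ha.ne', hlt⟩)
  have hc0 : 0 ≤ c := ha.le.trans hac.le
  have hc2 : c ^ 2 < ‖a‖ := (Real.lt_sqrt hc0).mp hc
  have hc1 : c < 1 := by nlinarith
  obtain ⟨C, hC0, hC⟩ := hg.isBigO_sub_sub_deriv_mul.exists_pos
  have hquad : ∀ᶠ z in 𝓝 0, ‖g z - a * z‖ ≤ C * ‖z‖ ^ 2 := by
    simpa [hg0] using hC.bound
  have hlin := hg.differentiableAt.hasDerivAt.eventually_norm_le_mul hg0 hac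
  obtain ⟨r, hr, hball⟩ :=
    eventually_nhds_iff_ball.mp (hquad.and (hlin.and hg.eventually_analyticAt))
  have hmaps := mapsTo_ball_zero_of_norm_le hc1.le fun z hz => (hball z hz).2.1
  have hstep (n : ℕ) (z : ℂ) (hz : z ∈ ball 0 r) :
      ‖g^[n + 1] z / a ^ (n + 1) - g^[n] z / a ^ n‖ ≤ C * r ^ 2 / ‖a‖ * (c ^ 2 / ‖a‖) ^ n := by
    have hw : ‖g^[n] z‖ ≤ c ^ n * r :=
      (norm_iterate_le_of_norm_le hc0 hmaps (fun z hz => (hball z hz).2.1) n hz).trans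
        (mul_le_mul_of_nonneg_left (mem_ball_zero_iff.mp hz).le (pow_nonneg hc0 n))
    rw [iterate_succ_div_pow_sub g hg' n z, norm_div, norm_pow,
      div_le_iff₀ (pow_pos ha _)]
    calc ‖g (g^[n] z) - a * g^[n] z‖ ≤ C * ‖g^[n] z‖ ^ 2 := (hball _ (hmaps.iterate n hz)).1
      _ ≤ C * (c ^ n * r) ^ 2 := by gcongr
      _ = C * r ^ 2 / ‖a‖ * (c ^ 2 / ‖a‖) ^ n * ‖a‖ ^ (n + 1) := by
        rw [div_pow]
        field_simp
        ring
  have hsum : Summable fun n => C * r ^ 2 / ‖a‖ * (c ^ 2 / ‖a‖) ^ n :=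
    (summable_geometric_of_lt_one (by positivity) ((div_lt_one ha).mpr hc2)).mul_left _
  obtain ⟨φ, hφ⟩ :=
    exists_tendstoUniformlyOn_of_norm_sub_le (F := fun n z => g^[n] z / a ^ n) hsum hstep
  exact ⟨φ, .of_tendstoLocallyUniformlyOn isOpen_ball (mem_ball_self hr) hmaps
    (fun z hz => (hball z hz).2.2.differentiableAt.differentiableWithinAt) hg0 hg'
    hφ.tendstoLocallyUniformlyOn⟩

theorem exists_isKoenigsCoordinate_of_one_lt_norm {g : ℂ → ℂ} (hg : AnalyticAt ℂ g 0)
    (hg0 : g 0 = 0) (hgt : 1 < ‖deriv g 0‖) : ∃ φ, IsKoenigsCoordinate g φ := by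
  have hd : deriv g 0 ≠ 0 := norm_pos_iff.mp (one_pos.trans hgt)
  obtain ⟨g', hg'an, hg'0, hg'd, hleft, -⟩ := hg.exists_localInverse hd
  rw [hg0] at hg'an hg'0 hg'd
  obtain ⟨φ, hφ⟩ := exists_isKoenigsCoordinate_of_norm_lt_one hg'an hg'0
    (by simpa [hg'd] using hd) (by simpa [hg'd] using inv_lt_one_of_one_lt₀ hgt)
  exact ⟨φ, hφ.of_leftInverse hg.continuousAt hg0 hd hg'd hleft⟩

/-- Koenigs' linearization theorem: a germ of holomorphic diffeomorphism g at 0 with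
|g'(0)| ≠ 1 is holomorphically linearizable: there is a germ h with h(0)=0, h'(0)=1 and
h⁻¹∘g∘h(z) = g'(0)·z near 0 (equivalently g(h z) = h(g'(0)·z) near 0). -/
theorem stmt8 (g : ℂ → ℂ) (hg : AnalyticAt ℂ g 0) (hg0 : g 0 = 0)
    (hg' : deriv g 0 ≠ 0) (hmult : ‖deriv g 0‖ ≠ 1) :
    ∃ h : ℂ → ℂ, AnalyticAt ℂ h 0 ∧ h 0 = 0 ∧ deriv h 0 = 1 ∧
      ∀ᶠ z in nhds (0 : ℂ), g (h z) = h (deriv g 0 * z) := by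
  obtain ⟨φ, hφ⟩ : ∃ φ, IsKoenigsCoordinate g φ := hmult.lt_or_gt.elim
    (exists_isKoenigsCoordinate_of_norm_lt_one hg hg0 hg')
    (exists_isKoenigsCoordinate_of_one_lt_norm hg hg0)
  exact hφ.exists_linearization hg.continuousAt hg0
end

section
/- A formal power series f(z) = λz + Σ_{n≥2} a_n z^n with λ = e^{2πiα}, α irrational, cannot commute (under formal composition) with a nondegenerate parabolic formal germ g(z) = μz + Σ_{n≥2} b_n z^n where μ is a root of unity and g^q ≠ id for q the order of μ, unless no such g exists; i.e., if f∘g = g∘f formally and μ^q = 1, then g^q = id. -/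
/-!
Put `h = g^[q]`: it commutes with `f` and is tangent to the identity. If `h ≠ id` near `0`, write
`h z - z = z ^ m * ψ z` with `m ≥ 2` and `ψ 0 ≠ 0`. The quotient `(h (f z) - f z) / (h z - z)` then
tends to `λ ^ m`, since `f z ~ λ z`; but by commutation it is also the difference quotient
`(f (h z) - f z) / (h z - z)` of `f` between two points tending to `0`, so it tends to `λ`.
Hence `λ ^ (m - 1) = 1`, which is impossible for irrational `α`.
-/

open Filter Function

open scoped Topology

section

variable {𝕜 : Type*} [NontriviallyNormedField 𝕜]

theorem HasStrictDerivAt.tendsto_slope_comp {f : 𝕜 → 𝕜} {c x : 𝕜} (hf : HasStrictDerivAt f c x)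
    {α : Type*} {l : Filter α} {u w : α → 𝕜} (hu : Tendsto u l (𝓝 x)) (hw : Tendsto w l (𝓝 x))
    (huw : ∀ᶠ z in l, u z ≠ w z) :
    Tendsto (fun z => (f (u z) - f (w z)) / (u z - w z)) l (𝓝 c) := by
  have hlo := (hasDerivAtFilter_iff_isLittleO.mp hf).comp_tendsto (hu.prodMk_nhds hw)
  have := hlo.tendsto_div_nhds_zero.const_add c
  rw [add_zero] at this
  refine this.congr' ?_
  filter_upwards [huw] with z hz
  simp only [comp_apply, smul_eq_mul]
  field_simp [sub_ne_zero.mpr hz]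
  ring

theorem tendsto_comp_div_of_eventuallyEq_pow_mul {f φ ψ : 𝕜 → 𝕜} {c : 𝕜} {m : ℕ}
    (hf : HasDerivAt f c 0) (hf0 : f 0 = 0) (hψ : ContinuousAt ψ 0) (hψ0 : ψ 0 ≠ 0)
    (hφ : φ =ᶠ[𝓝 0] fun z => z ^ m * ψ z) :
    Tendsto (fun z => φ (f z) / φ z) (𝓝[≠] 0) (𝓝 (c ^ m)) := by
  have hft : Tendsto f (𝓝 0) (𝓝 0) := by simpa [hf0] using hf.continuousAt.tendsto
  have hslope : Tendsto (fun z => f z / z) (𝓝[≠] 0) (𝓝 c) :=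
    (hasDerivAt_iff_tendsto_slope.mp hf).congr fun z => by simp [slope_def_field, hf0]
  have hψf : Tendsto (fun z => ψ (f z) / ψ z) (𝓝[≠] 0) (𝓝 1) := by
    have := (hψ.tendsto.comp hft).div hψ.tendsto hψ0
    rw [div_self hψ0] at this
    exact this.mono_left nhdsWithin_le_nhds
  have := (hslope.pow m).mul hψf
  rw [mul_one] at this
  refine this.congr' ?_
  filter_upwards [(hft.eventually hφ).filter_mono nhdsWithin_le_nhds,
    hφ.filter_mono nhdsWithin_le_nhds, (hψ.eventually_ne hψ0).filter_mono nhdsWithin_le_nhds,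
    self_mem_nhdsWithin] with z hφf hφz hψz hz
  rw [hφf, hφz]
  field_simp [hz, hψz]
  ring

theorem AnalyticAt.iterate {E : Type*} [NormedAddCommGroup E] [NormedSpace 𝕜 E] {g : E → E} {x : E}
    (hg : AnalyticAt 𝕜 g x) (hx : g x = x) (n : ℕ) : AnalyticAt 𝕜 g^[n] x := by
  induction n with
  | zero => exact analyticAt_id
  | succ n ih =>
    rw [iterate_succ']
    exact (iterate_fixed hx n ▸ hg).comp ih

theorem Filter.EventuallyEq.comp_iterate_of_comm {α : Type*} {l : Filter α} {f g : α → α}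
    (hcomm : f ∘ g =ᶠ[l] g ∘ f) (hg : Tendsto g l l) (n : ℕ) : f ∘ g^[n] =ᶠ[l] g^[n] ∘ f := by
  induction n with
  | zero => rfl
  | succ n ih =>
    filter_upwards [hg.eventually ih, hcomm] with z hgz hz
    simp only [comp_apply, iterate_succ_apply] at hgz hz ⊢
    rw [hgz, hz]

theorem AnalyticAt.two_le_analyticOrderAt [CharZero 𝕜] {E : Type*} [NormedAddCommGroup E]
    [NormedSpace 𝕜 E] [CompleteSpace E] {φ : 𝕜 → E} {x : 𝕜} (hφ : AnalyticAt 𝕜 φ x)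
    (h0 : φ x = 0) (h1 : deriv φ x = 0) : 2 ≤ analyticOrderAt φ x := by
  rw [← Nat.cast_two, natCast_le_analyticOrderAt_iff_iteratedDeriv_eq_zero hφ]
  intro i hi
  interval_cases i <;> simpa

theorem exists_pow_eq_one_of_commute_of_tangent_to_id [CharZero 𝕜] [CompleteSpace 𝕜]
    {f h : 𝕜 → 𝕜} {c : 𝕜} (hf : HasStrictDerivAt f c 0) (hf0 : f 0 = 0) (hc : c ≠ 0)
    (ha : AnalyticAt 𝕜 h 0) (h0 : h 0 = 0) (hd : HasDerivAt h 1 0)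
    (hcomm : f ∘ h =ᶠ[𝓝 0] h ∘ f) (hne : ¬ h =ᶠ[𝓝 0] id) : ∃ k, k ≠ 0 ∧ c ^ k = 1 := by
  set φ : 𝕜 → 𝕜 := fun z => h z - z
  have hφa : AnalyticAt 𝕜 φ 0 := ha.sub analyticAt_id
  have hφ_ne : ¬ ∀ᶠ z in 𝓝 0, φ z = 0 := fun hφ => hne (hφ.mono fun z => sub_eq_zero.mp)
  have hφ_top : analyticOrderAt φ 0 ≠ ⊤ := mt analyticOrderAt_eq_top.mp hφ_ne
  obtain ⟨ψ, hψa, hψ0, hφψ⟩ := hφa.analyticOrderAt_ne_top.mp hφ_top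
  set m := analyticOrderNatAt φ 0
  have hm : 2 ≤ m := by
    have := hφa.two_le_analyticOrderAt (by simp [φ, h0])
      ((hd.sub (hasDerivAt_id 0)).deriv.trans (sub_self 1))
    rwa [← Nat.cast_analyticOrderNatAt hφ_top, ← Nat.cast_two, Nat.cast_le] at this
  have hlim_pow : Tendsto (fun z => φ (f z) / φ z) (𝓝[≠] 0) (𝓝 (c ^ m)) :=
    tendsto_comp_div_of_eventuallyEq_pow_mul hf.hasDerivAt hf0 hψa.continuousAt hψ0
      (by simpa using hφψ)
  have hlim : Tendsto (fun z => φ (f z) / φ z) (𝓝[≠] 0) (𝓝 c) := by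
    have hφ_punct := (hφa.eventually_eq_zero_or_eventually_ne_zero).resolve_left hφ_ne
    have hh : Tendsto h (𝓝[≠] 0) (𝓝 0) := by
      simpa [h0] using ha.continuousAt.tendsto.mono_left nhdsWithin_le_nhds
    refine (hf.tendsto_slope_comp hh (tendsto_nhdsWithin_of_tendsto_nhds tendsto_id)
      (hφ_punct.mono fun z hz => sub_ne_zero.mp hz)).congr' ?_
    filter_upwards [hcomm.filter_mono nhdsWithin_le_nhds] with z (hz : f (h z) = h (f z))
    simp only [φ, id, hz]
  refine ⟨m - 1, by omega, (mul_eq_right₀ hc).mp ?_⟩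
  rw [← pow_succ, Nat.sub_add_cancel (by omega)]
  exact tendsto_nhds_unique hlim_pow hlim

end

theorem Irrational.exp_two_pi_I_mul_pow_ne_one {α : ℝ} (hα : Irrational α) {k : ℕ} (hk : k ≠ 0) :
    Complex.exp (2 * Real.pi * Complex.I * α) ^ k ≠ 1 := by
  intro h
  obtain ⟨n, hn⟩ := Complex.exp_eq_one_iff.mp ((Complex.exp_nat_mul _ k).trans h)
  have hkα : ((k * α : ℝ) : ℂ) = n := by
    have h2π : (2 * Real.pi * Complex.I : ℂ) ≠ 0 := by simp [Real.pi_ne_zero]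
    apply mul_right_cancel₀ h2π
    push_cast
    linear_combination hn
  exact (hα.natCast_mul hk).ne_int n (by exact_mod_cast hkα)

theorem stmt10_general (f g : ℂ → ℂ) (α : ℝ) (hα : Irrational α) (μ : ℂ) (q : ℕ)
    (hfa : AnalyticAt ℂ f 0) (hga : AnalyticAt ℂ g 0)
    (hf0 : f 0 = 0) (hg0 : g 0 = 0)
    (hf' : deriv f 0 = Complex.exp (2 * Real.pi * Complex.I * α))
    (hg' : deriv g 0 = μ) (hμ : μ ^ q = 1)
    (hcomm : ∀ᶠ z in nhds (0 : ℂ), f (g z) = g (f z)) :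
    ∀ᶠ z in nhds (0 : ℂ), g^[q] z = z := by
  have hg_tendsto : Tendsto g (𝓝 0) (𝓝 0) := by simpa [hg0] using hga.continuousAt.tendsto
  have hgq_deriv : HasDerivAt g^[q] 1 0 := by
    simpa [hg', hμ] using (hga.hasStrictDerivAt.iterate 0 hg0 q).hasDerivAt
  by_contra hne
  obtain ⟨k, hk, hpow⟩ := exists_pow_eq_one_of_commute_of_tangent_to_id hfa.hasStrictDerivAt hf0
    (hf' ▸ Complex.exp_ne_zero _) (hga.iterate hg0 q) (iterate_fixed hg0 q) hgq_deriv
    (EventuallyEq.comp_iterate_of_comm hcomm hg_tendsto q) hne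
  exact hα.exp_two_pi_I_mul_pow_ne_one hk (hf' ▸ hpow)

/-- A germ f with multiplier e^{2πiα}, α irrational, cannot commute with a nondegenerate
parabolic germ: if g has multiplier μ with μ^q = 1 and f∘g = g∘f as germs at 0, then
g^q = id as a germ at 0 (so g is of finite order, not nondegenerate parabolic). -/
theorem stmt10 (f g : ℂ → ℂ) (α : ℝ) (hα : Irrational α) (μ : ℂ) (q : ℕ) (hq : 0 < q)
    (hfa : AnalyticAt ℂ f 0) (hga : AnalyticAt ℂ g 0)
    (hf0 : f 0 = 0) (hg0 : g 0 = 0)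
    (hf' : deriv f 0 = Complex.exp (2 * Real.pi * Complex.I * α))
    (hg' : deriv g 0 = μ) (hg'0 : μ ≠ 0) (hμ : μ ^ q = 1)
    (hcomm : ∀ᶠ z in nhds (0 : ℂ), f (g z) = g (f z)) :
    ∀ᶠ z in nhds (0 : ℂ), g^[q] z = z :=
  stmt10_general f g α hα μ q hfa hga hf0 hg0 hf' hg' hμ hcomm
end
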